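/- Let N be a natural number and a_1, …, a_n nonnegative integers with n ≥ N. Let c_j = e_j(a_1,…,a_n) be the j-th elementary symmetric function of the a_i. Then ∑_{i=1}^n C(a_i+N, N) = (1/N!)·∑_{k=1}^{N} ⟦N+1, k+1⟧ det(M_k)(c_1,…,c_k) + n, where M_k is the k×k matrix with first column (c_1, 2c_2, …, kc_k)^T, 1's on the superdiagonal, entries c_{i-j+1} for columns j ≥ 2 (with c_0 = 1, c_m = 0 for m < 0), and ⟦·,·⟧ denotes unsigned Stirling numbers of the first kind. -/

import Mathlib

/-!
Expanding the lower Hessenberg matrix `M_k` along its last row gives a recursion for `det M_k`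
which is exactly Newton's identity expressing the power sum `p_k = ∑ aᵢ ^ k` through
`e_1, …, e_k` and `p_1, …, p_{k-1}`; hence `det M_k = p_k`. On the other side,
`N! * C(a + N, N) = (a + 1) (a + 2) ⋯ (a + N)` is a shifted rising factorial, and the coefficient
of `a ^ k` in it is the Stirling number `⟦N + 1, k + 1⟧`. Summing over `i`, the constant term
contributes `⟦N + 1, 1⟧ * n = N! * n`.
-/

def stirling1 : ℕ → ℕ → ℕ
  | 0, 0 => 1
  | 0, _ + 1 => 0
  | _ + 1, 0 => 0
  | n + 1, m + 1 => stirling1 n m + n * stirling1 n (m + 1)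

def esymm {R : Type*} [CommRing R] (n j : ℕ) (x : ℕ → R) : R :=
  ∑ s ∈ Finset.powersetCard j (Finset.range n), ∏ i ∈ s, x i

def matM {R : Type*} [CommRing R] (n : ℕ) (x : ℕ → R) (r : ℕ) :
    Matrix (Fin r) (Fin r) R :=
  fun i j =>
    if (j : ℕ) = 0 then ((i : ℕ) + 1 : ℕ) * esymm n ((i : ℕ) + 1) x
    else if (i : ℕ) + 1 < (j : ℕ) then 0
    else esymm n ((i : ℕ) + 1 - (j : ℕ)) x

open Finset Polynomial

theorem stirling1_apply_eq_stirlingFirst : ∀ n m, stirling1 n m = Nat.stirlingFirst n m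
  | 0, 0 | 0, _ + 1 | _ + 1, 0 => rfl
  | n + 1, m + 1 => by
    rw [stirling1, Nat.stirlingFirst_succ_succ, stirling1_apply_eq_stirlingFirst n m,
      stirling1_apply_eq_stirlingFirst n (m + 1), add_comm]

theorem stirling1_eq_stirlingFirst : stirling1 = Nat.stirlingFirst :=
  funext₂ stirling1_apply_eq_stirlingFirst

theorem coeff_ascPochhammer_nat (n k : ℕ) :
    (ascPochhammer ℕ n).coeff k = Nat.stirlingFirst n k := by
  induction n generalizing k with
  | zero => cases k <;> simp [coeff_one]
  | succ n ih =>
    rw [ascPochhammer_succ_right, ← C_eq_natCast, mul_add, coeff_add, coeff_mul_C]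
    cases k with
    | zero => cases n <;> simp [ih]
    | succ k => simp [coeff_mul_X, ih, Nat.stirlingFirst_succ_succ, mul_comm, add_comm]

theorem coeff_ascPochhammer_nat_comp_X_add_one (n k : ℕ) :
    ((ascPochhammer ℕ n).comp (X + 1)).coeff k = Nat.stirlingFirst (n + 1) (k + 1) := by
  rw [← coeff_ascPochhammer_nat, ascPochhammer_succ_left, coeff_X_mul]

theorem choose_add_mul_factorial_eq_sum_stirlingFirst (N a : ℕ) :
    (a + N).choose N * N.factorial =
      ∑ k ∈ range (N + 1), Nat.stirlingFirst (N + 1) (k + 1) * a ^ k := by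
  have h_deg : ((ascPochhammer ℕ N).comp (X + 1)).natDegree < N + 1 := by
    rw [natDegree_comp, ascPochhammer_natDegree, ← C_1, natDegree_X_add_C, mul_one]
    exact N.lt_succ_self
  calc (a + N).choose N * N.factorial = (a + 1).ascFactorial N := by
        rw [Nat.ascFactorial_eq_factorial_mul_choose, mul_comm]
    _ = ((ascPochhammer ℕ N).comp (X + 1)).eval a := by
        rw [eval_comp, ← ascPochhammer_nat_eq_ascFactorial]
        simp
    _ = _ := by
        simp only [eval_eq_sum_range' h_deg, coeff_ascPochhammer_nat_comp_X_add_one]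

theorem sum_range_succ_eq_add_sum_Icc {M : Type*} [AddCommMonoid M] (f : ℕ → M) (N : ℕ) :
    ∑ k ∈ range (N + 1), f k = f 0 + ∑ k ∈ Icc 1 N, f k := by
  rw [range_eq_Ico, sum_eq_sum_Ico_succ_bot N.succ_pos, zero_add, Nat.succ_eq_add_one,
    Ico_add_one_right_eq_Icc]

theorem MvPolynomial.psum_succ_eq_sum (σ R : Type*) [Fintype σ] [CommRing R] (r : ℕ) :
    psum σ R (r + 1) = (-1) ^ r * ((r + 1 : ℕ) : MvPolynomial σ R) * esymm σ R (r + 1) +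
      ∑ c ∈ range r, (-1) ^ (r + c + 1) * esymm σ R (r - c) * psum σ R (c + 1) := by
  rw [psum_eq_mul_esymm_sub_sum σ R (r + 1) r.succ_pos, sub_eq_add_neg, ← sum_neg_distrib]
  congr 1
  · rw [pow_succ, pow_succ]
    push_cast
    ring
  · symm
    refine sum_nbij' (fun c => (r - c, c + 1)) (fun a => a.2 - 1) ?_ ?_ ?_ ?_ ?_
    · intro c hc
      simp only [mem_filter, HasAntidiagonal.mem_antidiagonal, Set.mem_Ioo, mem_range] at hc ⊢
      omega
    · intro a ha
      simp only [mem_filter, HasAntidiagonal.mem_antidiagonal, Set.mem_Ioo, mem_range] at ha ⊢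
      omega
    · intro c _
      simp
    · intro a ha
      simp only [mem_filter, HasAntidiagonal.mem_antidiagonal, Set.mem_Ioo] at ha
      exact Prod.ext (by simp only; omega) (by simp only; omega)
    · intro c hc
      rw [show r + c + 1 = (r - c) + 2 * c + 1 by have := mem_range.mp hc; omega,
        pow_add, pow_add, pow_mul]
      simp

variable {R : Type*} [CommRing R]

theorem esymm_eq_aeval (n j : ℕ) (x : ℕ → R) :
    esymm n j x = MvPolynomial.aeval (fun i : Fin n => x i) (MvPolynomial.esymm (Fin n) R j) := by
  rw [MvPolynomial.esymm, esymm, ← Nat.Iio_eq_range, ← Fin.map_valEmbedding_univ,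
    powersetCard_map, sum_map]
  simp [prod_map]

theorem sum_pow_eq_aeval (n k : ℕ) (x : ℕ → R) :
    ∑ i ∈ range n, x i ^ k =
      MvPolynomial.aeval (fun i : Fin n => x i) (MvPolynomial.psum (Fin n) R k) := by
  simp [MvPolynomial.psum, Fin.sum_univ_eq_sum_range (fun i => x i ^ k)]

theorem sum_pow_succ_eq_sum (n r : ℕ) (x : ℕ → R) :
    ∑ i ∈ range n, x i ^ (r + 1) = (-1) ^ r * ((r + 1 : ℕ) : R) * esymm n (r + 1) x +
      ∑ c ∈ range r, (-1) ^ (r + c + 1) * esymm n (r - c) x * ∑ i ∈ range n, x i ^ (c + 1) := by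
  simpa [esymm_eq_aeval, sum_pow_eq_aeval] using
    congrArg (MvPolynomial.aeval fun i : Fin n => x i)
      (MvPolynomial.psum_succ_eq_sum (Fin n) R r)

theorem esymm_zero (n : ℕ) (x : ℕ → R) : esymm n 0 x = 1 := by
  simp [esymm]

def leadingBlock (a : ℕ → ℕ → R) (r : ℕ) : Matrix (Fin r) (Fin r) R :=
  Matrix.of fun i j => a i j

section Hessenberg

variable {a : ℕ → ℕ → R} (h_zero : ∀ i j, i + 1 < j → a i j = 0)
  (h_one : ∀ i, a i (i + 1) = 1)
include h_zero h_one

/-- Deleting the last row and column `c` leaves a block lower triangular matrix whose blocks are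
the leading `c × c` block and a unitriangular one; the proof peels off the unitriangular part one
column at a time. -/
theorem det_leadingBlock_submatrix_castSucc_succAbove (r : ℕ) (c : Fin (r + 1)) :
    ((leadingBlock a (r + 1)).submatrix Fin.castSucc c.succAbove).det =
      (leadingBlock a c).det := by
  induction r with
  | zero =>
    obtain rfl := Fin.fin_one_eq_zero c
    simp [Matrix.det_isEmpty]
  | succ r ih =>
    induction c using Fin.lastCases with
    | last => rw [Fin.succAbove_last]; rfl
    | cast c =>
      set B := (leadingBlock a (r + 2)).submatrix Fin.castSucc c.castSucc.succAbove
      have h_minor : B.submatrix Fin.castSucc Fin.castSucc =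
          (leadingBlock a (r + 1)).submatrix Fin.castSucc c.succAbove := by
        ext i j
        simp only [B, Matrix.submatrix_apply, Fin.castSucc_succAbove_castSucc]
        rfl
      have h_last_col : ∀ i : Fin (r + 1), B i (Fin.last r) = a i (r + 1) := by
        intro i
        simp only [B, Matrix.submatrix_apply]
        rw [Fin.succAbove_of_le_castSucc _ _ (Fin.castSucc_le_castSucc_iff.mpr c.le_last),
          Fin.succ_last]
        rfl
      have h_above : ∀ i : Fin r, B i.castSucc (Fin.last r) = 0 := fun i =>
        (h_last_col _).trans (h_zero _ _ (by simp))
      have h_corner : B (Fin.last r) (Fin.last r) = 1 := (h_last_col _).trans (h_one r)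
      rw [Matrix.det_succ_column B (Fin.last r), Fin.sum_univ_castSucc]
      simp only [h_above, h_corner, Fin.succAbove_last, h_minor, ih c]
      simp

theorem det_leadingBlock_succ (r : ℕ) :
    (leadingBlock a (r + 1)).det =
      ∑ c ∈ range (r + 1), (-1) ^ (r + c) * a r c * (leadingBlock a c).det := by
  rw [Matrix.det_succ_row _ (Fin.last r), ← Fin.sum_univ_eq_sum_range]
  refine sum_congr rfl fun c _ => ?_
  rw [Fin.succAbove_last, det_leadingBlock_submatrix_castSucc_succAbove h_zero h_one]
  rfl

end Hessenberg

theorem matM_eq_leadingBlock (n : ℕ) (x : ℕ → R) (r : ℕ) :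
    matM n x r = leadingBlock (fun i j => if j = 0 then ((i + 1 : ℕ) : R) * esymm n (i + 1) x
      else if i + 1 < j then 0 else esymm n (i + 1 - j) x) r :=
  rfl

theorem det_matM_succ (n r : ℕ) (x : ℕ → R) :
    (matM n x (r + 1)).det = (-1) ^ r * ((r + 1 : ℕ) : R) * esymm n (r + 1) x +
      ∑ c ∈ range r, (-1) ^ (r + c + 1) * esymm n (r - c) x * (matM n x (c + 1)).det := by
  simp only [matM_eq_leadingBlock]
  rw [det_leadingBlock_succ (fun i j h => by rw [if_neg (by omega), if_pos h])
    (fun i => by simp [esymm_zero]), sum_range_succ', add_comm]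
  congr 1
  · simp [Matrix.det_fin_zero, mul_assoc]
  · refine sum_congr rfl fun c hc => ?_
    rw [if_neg c.succ_ne_zero, if_neg (by have := mem_range.mp hc; omega),
      Nat.add_sub_add_right, ← add_assoc]

theorem det_matM_eq_sum_pow (n : ℕ) (x : ℕ → R) (r : ℕ) :
    (matM n x (r + 1)).det = ∑ i ∈ range n, x i ^ (r + 1) := by
  induction r using Nat.strong_induction_on with
  | _ r ih =>
    rw [det_matM_succ, sum_pow_succ_eq_sum]
    congr 1
    exact sum_congr rfl fun c hc => by rw [ih c (mem_range.mp hc)]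

theorem euler_char_split_chern_general (N n : ℕ) (a : ℕ → ℕ) :
    (∑ i ∈ Finset.range n, ((a i + N).choose N : ℚ)) =
      (1 / (N.factorial : ℚ)) *
        (∑ k ∈ Finset.Icc 1 N, (stirling1 (N + 1) (k + 1) : ℚ) *
          (matM n (fun i => (a i : ℚ)) k).det) + n := by
  set p : ℕ → ℚ := fun k => ∑ i ∈ range n, (a i : ℚ) ^ k
  have h_choose : ∀ i, ((a i + N).choose N : ℚ) = 1 / N.factorial *
      ∑ k ∈ range (N + 1), (Nat.stirlingFirst (N + 1) (k + 1) : ℚ) * a i ^ k := by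
    intro i
    rw [one_div_mul_eq_div, eq_div_iff (by positivity)]
    exact_mod_cast choose_add_mul_factorial_eq_sum_stirlingFirst N (a i)
  have h_det : ∀ k ∈ Icc 1 N, p k = (matM n (fun i => (a i : ℚ)) k).det := by
    intro k hk
    obtain ⟨j, rfl⟩ := Nat.exists_eq_add_of_le' (mem_Icc.mp hk).1
    exact (det_matM_eq_sum_pow n _ j).symm
  have h_p_zero : p 0 = n := by simp [p]
  calc ∑ i ∈ range n, ((a i + N).choose N : ℚ)
      = 1 / N.factorial *
          ∑ k ∈ range (N + 1), (Nat.stirlingFirst (N + 1) (k + 1) : ℚ) * p k := by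
        simp only [h_choose, p, mul_sum]
        rw [sum_comm]
    _ = 1 / N.factorial * (N.factorial * p 0 +
          ∑ k ∈ Icc 1 N, (Nat.stirlingFirst (N + 1) (k + 1) : ℚ) * p k) := by
        rw [sum_range_succ_eq_add_sum_Icc, Nat.stirlingFirst_one_right]
    _ = _ := by
        rw [stirling1_eq_stirlingFirst, sum_congr rfl fun k hk => by rw [h_det k hk], h_p_zero]
        field_simp
        ring

theorem euler_char_split_chern (N n : ℕ) (hn : N ≤ n) (a : ℕ → ℕ) :
    (∑ i ∈ Finset.range n, ((a i + N).choose N : ℚ)) =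
      (1 / (N.factorial : ℚ)) *
        (∑ k ∈ Finset.Icc 1 N, (stirling1 (N + 1) (k + 1) : ℚ) *
          (matM n (fun i => (a i : ℚ)) k).det) + n :=
  euler_char_split_chern_general N n a
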